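/- arXiv:2604.00335 — 10 statements merged into one kernel-verified Lean document; each statement's English description precedes it below -/
import Mathlib

section
/- Let G be a finite group, let O be a transfer system on G, and let M be the maximal compatible transfer system of O. Then a transfer K → H ∈ O belongs to M if and only if the pair (O, T({K → H})) is compatible, where T({K → H}) is the transfer system generated by the single relation K → H. -/
/-- A transfer system on a group `G`: a binary relation on subgroups refining
inclusion, which is reflexive, closed under conjugation, restriction, and
composition. -/
structure TransferSystem (G : Type*) [Group G] where
  rel : Subgroup G → Subgroup G → Prop
  le_of_rel : ∀ {K H : Subgroup G}, rel K H → K ≤ H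
  refl : ∀ H : Subgroup G, rel H H
  conj : ∀ {K H : Subgroup G} (g : G), rel K H →
    rel (K.map (MulAut.conj g).toMonoidHom) (H.map (MulAut.conj g).toMonoidHom)
  restrict : ∀ {K H : Subgroup G} (L : Subgroup G), rel K H → L ≤ H → rel (K ⊓ L) L
  comp : ∀ {L K H : Subgroup G}, rel L K → rel K H → rel L H

/-- The pair `(Oa, Om)` of transfer systems is compatible. -/
def TransferSystem.Compatible {G : Type*} [Group G] (Oa Om : TransferSystem G) : Prop :=
  (∀ K H : Subgroup G, Om.rel K H → Oa.rel K H) ∧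
  ∀ K J H : Subgroup G, J ≤ H → Om.rel K H → Oa.rel (K ⊓ J) K → Oa.rel J H

/-- `M` is the maximal compatible transfer system of `O`. -/
def TransferSystem.IsMaxCompatible {G : Type*} [Group G] (O M : TransferSystem G) : Prop :=
  O.Compatible M ∧
  ∀ Om : TransferSystem G, O.Compatible Om → ∀ K H : Subgroup G, Om.rel K H → M.rel K H

/-- `T` is the transfer system generated by the binary relation `B`, i.e. the
smallest transfer system containing `B`. -/
def TransferSystem.IsGeneratedBy {G : Type*} [Group G] (T : TransferSystem G)
    (B : Subgroup G → Subgroup G → Prop) : Prop :=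
  (∀ K H : Subgroup G, B K H → T.rel K H) ∧
  ∀ T' : TransferSystem G, (∀ K H : Subgroup G, B K H → T'.rel K H) →
    ∀ K H : Subgroup G, T.rel K H → T'.rel K H

/-- The single transfer `K → H` is compatible with `Oa`. -/
def TransferSystem.EdgeCompatible {G : Type*} [Group G] (Oa : TransferSystem G)
    (K H : Subgroup G) : Prop :=
  ∀ J : Subgroup G, J ≤ H → Oa.rel (K ⊓ J) K → Oa.rel J H

/-- A transfer system is saturated. -/
def TransferSystem.Saturated {G : Type*} [Group G] (O : TransferSystem G) : Prop :=
  ∀ L K H : Subgroup G, L ≤ K → K ≤ H → O.rel L H → O.rel K H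

/-- A transfer system is disklike: every transfer is a restriction of a
transfer to the full group. -/
def TransferSystem.Disklike {G : Type*} [Group G] (O : TransferSystem G) : Prop :=
  ∀ K H : Subgroup G, O.rel K H → ∃ L : Subgroup G, O.rel L ⊤ ∧ K = L ⊓ H

/-- `r` is a proper restriction of `e` in the restriction order on transfers,
viewed as pairs of subgroups. -/
def RestrLt {G : Type*} [Group G] (r e : Subgroup G × Subgroup G) : Prop :=
  ∃ I : Subgroup G, I < e.2 ∧ r = (e.1 ⊓ I, I)

/-- `r ≺ e`: `r` is covered by `e` in the restriction order on transfers of `O`. -/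
def RestrCovBy {G : Type*} [Group G] (O : TransferSystem G)
    (r e : Subgroup G × Subgroup G) : Prop :=
  RestrLt r e ∧
    ¬ ∃ q : Subgroup G × Subgroup G, O.rel q.1 q.2 ∧ RestrLt r q ∧ RestrLt q e

/-- The binary relation `p⁻¹O` on subgroups of `G`, for `O` a transfer system
on `G ⧸ N`. -/
def preimageRel {G : Type*} [Group G] (N : Subgroup G) [N.Normal]
    (O : TransferSystem (G ⧸ N)) : Subgroup G → Subgroup G → Prop :=
  fun A B => ∃ K H : Subgroup (G ⧸ N), O.rel K H ∧
    A = Subgroup.comap (QuotientGroup.mk' N) K ∧ B = Subgroup.comap (QuotientGroup.mk' N) H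

namespace TransferSystem

variable {G : Type*} [Group G]

theorem Compatible.mono {Oa Om Om' : TransferSystem G} (h : Oa.Compatible Om)
    (hle : ∀ K H : Subgroup G, Om'.rel K H → Om.rel K H) : Oa.Compatible Om' :=
  ⟨fun K H hKH => h.1 K H (hle K H hKH),
    fun K J H hJH hKH hres => h.2 K J H hJH (hle K H hKH) hres⟩

theorem IsMaxCompatible.compatible_iff {O M Om : TransferSystem G} (hM : O.IsMaxCompatible M) :
    O.Compatible Om ↔ ∀ K H : Subgroup G, Om.rel K H → M.rel K H :=
  ⟨hM.2 Om, hM.1.mono⟩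

theorem IsGeneratedBy.le_iff {T T' : TransferSystem G} {B : Subgroup G → Subgroup G → Prop}
    (hT : T.IsGeneratedBy B) :
    (∀ K H : Subgroup G, T.rel K H → T'.rel K H) ↔ ∀ K H : Subgroup G, B K H → T'.rel K H :=
  ⟨fun hle K H hB => hle K H (hT.1 K H hB), hT.2 T'⟩

end TransferSystem

theorem stmt_0_general {G : Type*} [Group G] (O M T : TransferSystem G)
    (hM : O.IsMaxCompatible M) (K H : Subgroup G)
    (hT : T.IsGeneratedBy (fun A B => A = K ∧ B = H)) :
    M.rel K H ↔ O.Compatible T := by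
  rw [hM.compatible_iff, hT.le_iff]
  exact ⟨fun hKH A B ⟨hA, hB⟩ => hA ▸ hB ▸ hKH, fun h => h K H ⟨rfl, rfl⟩⟩

/-- A transfer `K → H ∈ O` belongs to the maximal compatible
transfer system `M` of `O` if and only if `(O, T({K → H}))` is compatible. -/
theorem stmt_0 {G : Type*} [Group G] [Finite G] (O M T : TransferSystem G)
    (hM : O.IsMaxCompatible M) (K H : Subgroup G) (hKH : O.rel K H)
    (hT : T.IsGeneratedBy (fun A B => A = K ∧ B = H)) :
    M.rel K H ↔ O.Compatible T :=
  stmt_0_general O M T hM K H hT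
end

section
/- Let G be a finite group and O_a a transfer system on G. Given transfers I → K ∈ O_a and K → H ∈ O_a, if both I → K and K → H are compatible with O_a, then the composite transfer I → H (which lies in O_a) is also compatible with O_a. -/
theorem TransferSystem.EdgeCompatible.trans {G : Type*} [Group G] {Oa : TransferSystem G}
    {I K H : Subgroup G} (hIK : I ≤ K) (hcIK : Oa.EdgeCompatible I K)
    (hcKH : Oa.EdgeCompatible K H) : Oa.EdgeCompatible I H := by
  intro J hJH hIJ
  have hrestrict : I ⊓ (K ⊓ J) = I ⊓ J := by rw [← inf_assoc, inf_of_le_left hIK]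
  exact hcKH J hJH (hcIK (K ⊓ J) inf_le_left (hrestrict ▸ hIJ))

theorem stmt_2_general {G : Type*} [Group G] (Oa : TransferSystem G)
    (I K H : Subgroup G) (hIK : Oa.rel I K)
    (hcIK : Oa.EdgeCompatible I K) (hcKH : Oa.EdgeCompatible K H) :
    Oa.EdgeCompatible I H :=
  hcIK.trans (Oa.le_of_rel hIK) hcKH

/-- if transfers `I → K` and `K → H` of `Oa` are both compatible
with `Oa`, then so is the composite transfer `I → H`. -/
theorem stmt_2 {G : Type*} [Group G] [Finite G] (Oa : TransferSystem G)
    (I K H : Subgroup G) (hIK : Oa.rel I K) (hKH : Oa.rel K H)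
    (hcIK : Oa.EdgeCompatible I K) (hcKH : Oa.EdgeCompatible K H) :
    Oa.EdgeCompatible I H :=
  stmt_2_general Oa I K H hIK hcIK hcKH
end

section
/- Let G be a finite group, O_a a transfer system on G, and B a binary relation on the subgroups of G refining inclusion. Then the pair (O_a, T(B)) is compatible if and only if every element of Res(B) := { (K ∩ J) → J : K → H ∈ B and J ≤ H } lies in O_a and is compatible with O_a. -/
namespace TransferSystem

variable {G : Type*} [Group G]

lemma mapSubgroup_conj_symm (g : G) :
    (MulAut.conj g).mapSubgroup.symm = (MulAut.conj g⁻¹).mapSubgroup := by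
  rw [MulEquiv.symm_mapSubgroup, map_inv]
  rfl

lemma rel_mapSubgroup_conj_iff (O : TransferSystem G) (g : G) {K H : Subgroup G} :
    O.rel ((MulAut.conj g).mapSubgroup K) ((MulAut.conj g).mapSubgroup H) ↔ O.rel K H := by
  refine ⟨fun h => ?_, O.conj g⟩
  have h' : O.rel ((MulAut.conj g).mapSubgroup.symm ((MulAut.conj g).mapSubgroup K))
      ((MulAut.conj g).mapSubgroup.symm ((MulAut.conj g).mapSubgroup H)) := by
    rw [mapSubgroup_conj_symm]
    exact O.conj g⁻¹ h
  simpa only [OrderIso.symm_apply_apply] using h'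

lemma EdgeCompatible.mapSubgroup_conj {O : TransferSystem G} {K H : Subgroup G}
    (h : O.EdgeCompatible K H) (g : G) :
    O.EdgeCompatible ((MulAut.conj g).mapSubgroup K) ((MulAut.conj g).mapSubgroup H) := by
  intro J hJ hKJ
  obtain ⟨J, rfl⟩ := (MulAut.conj g).mapSubgroup.surjective J
  rw [OrderIso.le_iff_le] at hJ
  rw [← OrderIso.map_inf, rel_mapSubgroup_conj_iff] at hKJ
  exact (O.rel_mapSubgroup_conj_iff g).2 (h J hJ hKJ)

def maxCompatible (O : TransferSystem G) : TransferSystem G where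
  rel K H := K ≤ H ∧ ∀ J ≤ H, O.rel (K ⊓ J) J ∧ O.EdgeCompatible (K ⊓ J) J
  le_of_rel h := h.1
  refl H := ⟨le_rfl, fun J hJ => by
    rw [inf_eq_right.mpr hJ]
    exact ⟨O.refl J, fun J' hJ' h => by rwa [inf_eq_right.mpr hJ'] at h⟩⟩
  conj {K H} g h := by
    refine ⟨Subgroup.map_mono h.1, fun J hJ => ?_⟩
    obtain ⟨J, rfl⟩ := (MulAut.conj g).mapSubgroup.surjective J
    change (MulAut.conj g).mapSubgroup J ≤ (MulAut.conj g).mapSubgroup H at hJ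
    rw [OrderIso.le_iff_le] at hJ
    obtain ⟨hKJ, hcompat⟩ := h.2 J hJ
    change O.rel ((MulAut.conj g).mapSubgroup K ⊓ _) _ ∧
      O.EdgeCompatible ((MulAut.conj g).mapSubgroup K ⊓ _) _
    rw [← OrderIso.map_inf]
    exact ⟨O.conj g hKJ, hcompat.mapSubgroup_conj g⟩
  restrict {K H} L h hL := by
    refine ⟨inf_le_right, fun J hJ => ?_⟩
    rw [inf_assoc, inf_eq_right.mpr hJ]
    exact h.2 J (hJ.trans hL)
  comp {L K H} hLK hKH := by
    refine ⟨hLK.1.trans hKH.1, fun J hJ => ?_⟩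
    obtain ⟨hKJ, hKJ_compat⟩ := hKH.2 J hJ
    obtain ⟨hLJ, hLJ_compat⟩ := hLK.2 (K ⊓ J) inf_le_left
    rw [← inf_assoc, inf_eq_left.mpr hLK.1] at hLJ hLJ_compat
    refine ⟨O.comp hLJ hKJ, fun J' hJ' hLJ' => hKJ_compat J' hJ' ?_⟩
    have hK : (K ⊓ J) ⊓ J' = K ⊓ J' := by rw [inf_assoc, inf_eq_right.mpr hJ']
    have hL : (L ⊓ J) ⊓ (K ⊓ J') = (L ⊓ J) ⊓ J' := by
      rw [inf_inf_inf_comm, inf_eq_left.mpr hLK.1, inf_assoc, inf_eq_right.mpr hJ']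
    rw [hK]
    exact hLJ_compat (K ⊓ J') (inf_le_inf_left K hJ') (hL ▸ hLJ')

lemma rel_of_maxCompatible_rel {O : TransferSystem G} {K H : Subgroup G}
    (h : O.maxCompatible.rel K H) : O.rel K H ∧ O.EdgeCompatible K H := by
  simpa only [inf_eq_left.mpr h.1] using h.2 H le_rfl

lemma compatible_iff_le_maxCompatible (Oa Om : TransferSystem G) :
    Oa.Compatible Om ↔ ∀ K H : Subgroup G, Om.rel K H → Oa.maxCompatible.rel K H := by
  constructor
  · rintro ⟨hle, hcompat⟩ K H hKH
    refine ⟨Om.le_of_rel hKH, fun J hJ => ?_⟩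
    have hKJ := Om.restrict J hKH hJ
    exact ⟨hle _ _ hKJ, fun J' hJ' => hcompat (K ⊓ J) J' J hJ' hKJ⟩
  · intro h
    exact ⟨fun K H hKH => (rel_of_maxCompatible_rel (h K H hKH)).1,
      fun K J H hJ hKH => (rel_of_maxCompatible_rel (h K H hKH)).2 J hJ⟩

lemma IsGeneratedBy.rel_le_iff {T : TransferSystem G} {B : Subgroup G → Subgroup G → Prop}
    (hT : T.IsGeneratedBy B) (O : TransferSystem G) :
    (∀ K H : Subgroup G, T.rel K H → O.rel K H) ↔ ∀ K H : Subgroup G, B K H → O.rel K H :=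
  ⟨fun h K H hKH => h K H (hT.1 K H hKH), hT.2 O⟩

end TransferSystem

theorem stmt_3_general {G : Type*} [Group G] (Oa T : TransferSystem G)
    (B : Subgroup G → Subgroup G → Prop)
    (hT : T.IsGeneratedBy B) :
    Oa.Compatible T ↔
      ∀ K H J : Subgroup G, B K H → J ≤ H →
        Oa.rel (K ⊓ J) J ∧ Oa.EdgeCompatible (K ⊓ J) J := by
  rw [TransferSystem.compatible_iff_le_maxCompatible, hT.rel_le_iff]
  refine forall₂_congr fun K H => ⟨fun h J hKH hJ => (h hKH).2 J hJ, fun h hKH => ?_⟩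
  exact ⟨T.le_of_rel (hT.1 K H hKH), fun J hJ => h J hKH hJ⟩

/-- `(Oa, T(B))` is compatible iff every element of
`Res(B) = {(K ∩ J) → J : K → H ∈ B, J ≤ H}` lies in `Oa` and is compatible
with `Oa`. -/
theorem stmt_3 {G : Type*} [Group G] [Finite G] (Oa T : TransferSystem G)
    (B : Subgroup G → Subgroup G → Prop) (hB : ∀ K H : Subgroup G, B K H → K ≤ H)
    (hT : T.IsGeneratedBy B) :
    Oa.Compatible T ↔
      ∀ K H J : Subgroup G, B K H → J ≤ H →
        Oa.rel (K ⊓ J) J ∧ Oa.EdgeCompatible (K ⊓ J) J :=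
  stmt_3_general Oa T B hT
end

section
/- Let G be a finite group, O a transfer system on G, and M the maximal compatible transfer system of O. Then M is saturated. -/
/-! Let `M'` be the saturated hull of `M`: `A → B ∈ M'` whenever `A ≤ B` and some `C ≤ A` has
`C → B ∈ M`. The compatibility condition for `A → B` reduces to that for `C → B`, because
restricting `A ⊓ J → A ∈ O` along `C ≤ A` gives `C ⊓ J → C ∈ O`. Hence `(O, M')` is compatible
whenever `(O, M)` is, and maximality of `M` forces `M' ≤ M`, i.e. `M` is saturated. -/

namespace TransferSystem

variable {G : Type*} [Group G]

def satClosure (M : TransferSystem G) : TransferSystem G where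
  rel A B := A ≤ B ∧ ∃ C : Subgroup G, C ≤ A ∧ M.rel C B
  le_of_rel h := h.1
  refl H := ⟨le_rfl, H, le_rfl, M.refl H⟩
  conj g := by
    rintro ⟨hKH, C, hCK, hCH⟩
    exact ⟨Subgroup.map_mono hKH, C.map _, Subgroup.map_mono hCK, M.conj g hCH⟩
  restrict L := by
    rintro ⟨-, C, hCK, hCH⟩ hLH
    exact ⟨inf_le_right, C ⊓ L, inf_le_inf_right L hCK, M.restrict L hCH hLH⟩
  comp := by
    rintro L K H ⟨hLK, C, hCL, hCK⟩ ⟨hKH, C', hC'K, hC'H⟩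
    exact ⟨hLK.trans hKH, C ⊓ C', inf_le_left.trans hCL,
      M.comp (M.restrict C' hCK hC'K) hC'H⟩

theorem rel_satClosure {M : TransferSystem G} {L K H : Subgroup G} (hLK : L ≤ K) (hKH : K ≤ H)
    (hLH : M.rel L H) : M.satClosure.rel K H :=
  ⟨hKH, L, hLK, hLH⟩

theorem Compatible.satClosure {O M : TransferSystem G} (h : O.Compatible M) :
    O.Compatible M.satClosure := by
  obtain ⟨-, hcompat⟩ := h
  refine ⟨?_, ?_⟩
  · rintro A B ⟨hAB, C, hCA, hCB⟩
    have hCA' : O.rel (C ⊓ A) C := by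
      rw [inf_eq_left.mpr hCA]
      exact O.refl C
    exact hcompat C A B hAB hCB hCA'
  · rintro K J H hJH ⟨-, C, hCK, hCH⟩ hKJ
    have hCJ : O.rel (C ⊓ J) C := by
      have h := O.restrict C hKJ hCK
      rwa [inf_right_comm, inf_eq_right.mpr hCK] at h
    exact hcompat C J H hJH hCH hCJ

end TransferSystem

theorem stmt_7_general {G : Type*} [Group G] (O M : TransferSystem G)
    (hM : O.IsMaxCompatible M) :
    M.Saturated := fun _ K H hLK hKH hLH =>
  hM.2 M.satClosure hM.1.satClosure K H (TransferSystem.rel_satClosure hLK hKH hLH)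

/-- the maximal compatible transfer system is always saturated. -/
theorem stmt_7 {G : Type*} [Group G] [Finite G] (O M : TransferSystem G)
    (hM : O.IsMaxCompatible M) :
    M.Saturated :=
  stmt_7_general O M hM
end

section
/- Let G be a finite group and O a transfer system on G. Then O is saturated if and only if the pair (O, O) is compatible. -/
namespace TransferSystem

variable {G : Type*} [Group G] {O : TransferSystem G}

theorem Saturated.compatible_self (hs : O.Saturated) : O.Compatible O :=
  ⟨fun _ _ h => h, fun K J H hJH hKH hKJ =>
    hs (K ⊓ J) J H inf_le_right hJH (O.comp hKJ hKH)⟩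

theorem Compatible.saturated (hc : O.Compatible O) : O.Saturated :=
  fun L K H hLK hKH hLH => hc.2 L K H hKH hLH (by rw [inf_eq_left.mpr hLK]; exact O.refl L)

end TransferSystem

theorem stmt_8_general {G : Type*} [Group G] (O : TransferSystem G) :
    O.Saturated ↔ O.Compatible O :=
  ⟨TransferSystem.Saturated.compatible_self, TransferSystem.Compatible.saturated⟩

/-- a transfer system is saturated iff it is self compatible. -/
theorem stmt_8 {G : Type*} [Group G] [Finite G] (O : TransferSystem G) :
    O.Saturated ↔ O.Compatible O :=
  stmt_8_general O
end

section
/- Let G be a finite group, O a transfer system on G, and M the maximal compatible transfer system of O. If M is disklike, then M = O. -/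
/-!
Compatibility puts every transfer of `M` into `O`. Conversely, a transfer `K → H` of `O` is shown
to lie in `M` by induction on `|H|`, assuming all transfers of `O` with smaller target already lie
in `M`. Disklikeness of `M` then makes every conjugate of `K → H` compatible with `O` as a single
edge. Adjoining these conjugates to `M` (composed with `M` on both sides) gives a transfer system
compatible with `O`: restrictions fall back into `M` because proper restrictions have smaller
target, and two new edges never compose because `|K| < |H|`. Maximality of `M` gives `K → H ∈ M`.
-/

section

variable {G : Type*} [Group G]

namespace Subgroup

theorem map_conj_one (S : Subgroup G) : S.map (MulAut.conj (1 : G)).toMonoidHom = S := by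
  convert S.map_id
  ext x
  simp

theorem map_conj_map_conj (g h : G) (S : Subgroup G) :
    (S.map (MulAut.conj h).toMonoidHom).map (MulAut.conj g).toMonoidHom
      = S.map (MulAut.conj (g * h)).toMonoidHom := by
  rw [map_map]
  congr 1
  ext x
  simp [mul_assoc]

theorem card_map_conj (g : G) (S : Subgroup G) :
    Nat.card (S.map (MulAut.conj g).toMonoidHom) = Nat.card S :=
  card_map_of_injective (MulAut.conj g).injective

theorem card_lt_card_of_lt [Finite G] {A B : Subgroup G} (h : A < B) : Nat.card A < Nat.card B :=
  Set.card_strictMono (SetLike.coe_ssubset_coe.mpr h)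

theorem not_map_conj_le_map_conj [Finite G] {K H : Subgroup G} (hlt : K < H) (g g' : G) :
    ¬ H.map (MulAut.conj g).toMonoidHom ≤ K.map (MulAut.conj g').toMonoidHom := fun hle => by
  have := card_le_of_le hle
  rw [card_map_conj, card_map_conj] at this
  exact this.not_gt (card_lt_card_of_lt hlt)

end Subgroup

namespace TransferSystem

theorem ext_rel {T T' : TransferSystem G} (h : ∀ K H, T.rel K H ↔ T'.rel K H) : T = T' := by
  obtain ⟨rel, _⟩ := T
  obtain ⟨rel', _⟩ := T'
  obtain rfl : rel = rel' := funext₂ fun K H => propext (h K H)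
  rfl

theorem rel_restrict_of_le (T : TransferSystem G) {K J H : Subgroup G} (h : T.rel K H)
    (hKJ : K ≤ J) (hJH : J ≤ H) : T.rel K J := by
  simpa only [inf_eq_left.mpr hKJ] using T.restrict J h hJH

theorem rel_inf_of_forall_lt (M : TransferSystem G) {K H A B L : Subgroup G} (hKH : K ≤ H)
    (hrestr : ∀ I < H, M.rel (K ⊓ I) I) (hA : M.rel A K) (hB : M.rel H B) (hLB : L ≤ B)
    (hHL : ¬ H ≤ L) : M.rel (A ⊓ L) L := by
  have hKL : M.rel (K ⊓ L) (H ⊓ L) := by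
    simpa only [← inf_assoc, inf_eq_left.mpr hKH] using
      hrestr (H ⊓ L) (inf_le_left.lt_of_ne fun he => hHL (inf_eq_left.mp he))
  have hAL : M.rel (A ⊓ L) (K ⊓ L) := by
    simpa only [← inf_assoc, inf_eq_left.mpr (M.le_of_rel hA)] using
      M.restrict (K ⊓ L) hA inf_le_left
  exact M.comp (M.comp hAL hKL) (M.restrict L hB hLB)

section Compatible

variable {Oa Om : TransferSystem G}

theorem Compatible.rel_of_le_of_le (hc : Oa.Compatible Om) {K J H : Subgroup G}
    (hKH : Om.rel K H) (hKJ : K ≤ J) (hJH : J ≤ H) : Oa.rel J H :=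
  hc.2 K J H hJH hKH (by simpa only [inf_eq_left.mpr hKJ] using Oa.refl K)

theorem Compatible.rel_of_inf_rel (hc : Oa.Compatible Om) {L J H : Subgroup G}
    (hL : Om.rel L ⊤) (hJH : J ≤ H) (h : Oa.rel (L ⊓ J) (L ⊓ H)) : Oa.rel J H :=
  hc.2 (L ⊓ H) J H hJH (Om.restrict H hL le_top)
    (by rwa [inf_assoc, inf_eq_right.mpr hJH])

end Compatible

def adjoinConj [Finite G] (M : TransferSystem G) {K H : Subgroup G} (hlt : K < H)
    (hrestr : ∀ (g : G) (I : Subgroup G), I < H.map (MulAut.conj g).toMonoidHom →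
      M.rel (K.map (MulAut.conj g).toMonoidHom ⊓ I) I) : TransferSystem G where
  rel A B := M.rel A B ∨ ∃ g : G,
    M.rel A (K.map (MulAut.conj g).toMonoidHom) ∧ M.rel (H.map (MulAut.conj g).toMonoidHom) B
  le_of_rel := by
    rintro A B (h | ⟨g, hA, hB⟩)
    · exact M.le_of_rel h
    · exact (M.le_of_rel hA).trans ((Subgroup.map_mono hlt.le).trans (M.le_of_rel hB))
  refl A := Or.inl (M.refl A)
  conj := by
    rintro A B g (h | ⟨g', hA, hB⟩)
    · exact Or.inl (M.conj g h)
    · refine Or.inr ⟨g * g', ?_, ?_⟩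
      · simpa only [Subgroup.map_conj_map_conj] using M.conj g hA
      · simpa only [Subgroup.map_conj_map_conj] using M.conj g hB
  restrict := by
    rintro A B L (h | ⟨g, hA, hB⟩) hLB
    · exact Or.inl (M.restrict L h hLB)
    by_cases hHL : H.map (MulAut.conj g).toMonoidHom ≤ L
    · have hAL : A ≤ L :=
        (M.le_of_rel hA).trans ((Subgroup.map_mono hlt.le).trans hHL)
      refine Or.inr ⟨g, by rwa [inf_eq_left.mpr hAL], ?_⟩
      simpa only [inf_eq_left.mpr hHL] using M.restrict L hB hLB
    · exact Or.inl (M.rel_inf_of_forall_lt (Subgroup.map_mono hlt.le) (hrestr g) hA hB hLB hHL)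
  comp := by
    rintro A B C (h | ⟨g, hA, hB⟩) (h' | ⟨g', hB', hC'⟩)
    · exact Or.inl (M.comp h h')
    · exact Or.inr ⟨g', M.comp h hB', hC'⟩
    · exact Or.inr ⟨g, hA, M.comp hB h'⟩
    · exact (Subgroup.not_map_conj_le_map_conj hlt g g' (M.le_of_rel (M.comp hB hB'))).elim

theorem adjoinConj_rel_self [Finite G] (M : TransferSystem G) {K H : Subgroup G} (hlt : K < H)
    (hrestr : ∀ (g : G) (I : Subgroup G), I < H.map (MulAut.conj g).toMonoidHom →
      M.rel (K.map (MulAut.conj g).toMonoidHom ⊓ I) I) :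
    (M.adjoinConj hlt hrestr).rel K H :=
  Or.inr ⟨1, by simpa only [Subgroup.map_conj_one] using M.refl K,
    by simpa only [Subgroup.map_conj_one] using M.refl H⟩

theorem compatible_adjoinConj [Finite G] {O M : TransferSystem G} (hc : O.Compatible M)
    {K H : Subgroup G} (hKH : O.rel K H) (hlt : K < H)
    (hrestr : ∀ (g : G) (I : Subgroup G), I < H.map (MulAut.conj g).toMonoidHom →
      M.rel (K.map (MulAut.conj g).toMonoidHom ⊓ I) I)
    (hedge : ∀ g : G, O.EdgeCompatible (K.map (MulAut.conj g).toMonoidHom)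
      (H.map (MulAut.conj g).toMonoidHom)) :
    O.Compatible (M.adjoinConj hlt hrestr) := by
  constructor
  · rintro A B (h | ⟨g, hA, hB⟩)
    · exact hc.1 A B h
    · exact O.comp (O.comp (hc.1 _ _ hA) (O.conj g hKH)) (hc.1 _ _ hB)
  rintro A J B hJB (h | ⟨g, hA, hB⟩) hAJ
  · exact hc.2 A J B hJB h hAJ
  set Kg := K.map (MulAut.conj g).toMonoidHom
  set Hg := H.map (MulAut.conj g).toMonoidHom
  have hKg : O.rel (J ⊓ Kg) Kg := by
    refine hc.2 A (J ⊓ Kg) Kg inf_le_right hA ?_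
    rwa [inf_left_comm, inf_eq_left.mpr (M.le_of_rel hA), inf_comm]
  have hHg : O.rel (J ⊓ Hg) Hg := by
    refine hedge g (J ⊓ Hg) inf_le_right ?_
    rwa [inf_left_comm, inf_eq_left.mpr (Subgroup.map_mono hlt.le)]
  exact hc.2 Hg J B hJB hB (by rwa [inf_comm])

namespace IsMaxCompatible

variable {O M : TransferSystem G} {H : Subgroup G}

theorem rel_of_le_of_le (hM : O.IsMaxCompatible M) (hd : M.Disklike)
    (hbelow : ∀ K' H', H' < H → O.rel K' H' → M.rel K' H') {K J : Subgroup G}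
    (hKH : O.rel K H) (hKJ : K ≤ J) (hJH : J ≤ H) : O.rel J H := by
  rcases hJH.lt_or_eq with hJH | rfl
  · obtain ⟨L, hL, rfl⟩ := hd K J (hbelow K J hJH (O.rel_restrict_of_le hKH hKJ hJH.le))
    exact hM.1.rel_of_inf_rel hL hJH.le
      (O.rel_restrict_of_le hKH (le_inf inf_le_left (hKJ.trans hJH.le)) inf_le_right)
  · exact O.refl J

theorem edgeCompatible (hM : O.IsMaxCompatible M) (hd : M.Disklike)
    (hbelow : ∀ K' H', H' < H → O.rel K' H' → M.rel K' H') {K : Subgroup G}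
    (hKH : O.rel K H) : O.EdgeCompatible K H := by
  intro J hJH hKJ
  rcases (O.le_of_rel hKH).eq_or_lt with rfl | hlt
  · rwa [inf_eq_right.mpr hJH] at hKJ
  obtain ⟨L, hL, hKJL⟩ := hd _ _ (hbelow _ _ hlt hKJ)
  by_cases hHL : H ≤ L
  · rw [inf_eq_right.mpr (hlt.le.trans hHL)] at hKJL
    exact hM.rel_of_le_of_le hd hbelow hKH (inf_eq_left.mp hKJL) hJH
  have hLH : L ⊓ H < H := inf_le_right.lt_of_ne fun he => hHL (inf_eq_right.mp he)
  have hKJ' : O.rel (K ⊓ J) (L ⊓ H) := by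
    have h := O.restrict (L ⊓ H) hKH inf_le_right
    rwa [← inf_assoc, inf_comm K L, ← hKJL, inf_assoc, inf_eq_left.mpr hJH] at h
  refine hM.1.rel_of_inf_rel hL hJH
    (hM.1.rel_of_le_of_le (hbelow _ _ hLH hKJ') ?_ (inf_le_inf_left L hJH))
  exact le_inf (hKJL ▸ inf_le_left) inf_le_right

theorem rel_of_rel [Finite G] (hM : O.IsMaxCompatible M) (hd : M.Disklike)
    (hbelow : ∀ (g : G) (K' H' : Subgroup G), H' < H.map (MulAut.conj g).toMonoidHom →
      O.rel K' H' → M.rel K' H') {K : Subgroup G} (hKH : O.rel K H) : M.rel K H := by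
  rcases (O.le_of_rel hKH).lt_or_eq with hlt | rfl
  · have hrestr g I hI := hbelow g _ I hI (O.restrict I (O.conj g hKH) hI.le)
    have hc := compatible_adjoinConj hM.1 hKH hlt hrestr
      fun g => hM.edgeCompatible hd (hbelow g) (O.conj g hKH)
    exact hM.2 _ hc K H (M.adjoinConj_rel_self hlt hrestr)
  · exact M.refl K

end IsMaxCompatible

end TransferSystem

end

/-- if the maximal compatible transfer system `M` of `O` is
disklike, then `M = O`. -/
theorem stmt_9 {G : Type*} [Group G] [Finite G] (O M : TransferSystem G)
    (hM : O.IsMaxCompatible M) (hd : M.Disklike) :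
    M = O := by
  have hOM : ∀ n, ∀ K H : Subgroup G, Nat.card H = n → O.rel K H → M.rel K H := by
    intro n
    induction n using Nat.strong_induction_on with
    | _ n ih =>
      rintro K H rfl hKH
      refine hM.rel_of_rel hd (fun g K' H' hH' => ih _ ?_ K' H' rfl) hKH
      simpa only [Subgroup.card_map_conj] using Subgroup.card_lt_card_of_lt hH'
  exact TransferSystem.ext_rel fun K H => ⟨hM.1.1 K H, hOM _ K H rfl⟩
end

section
/- Let G be a finite group and let Tu(G) be the tulip transfer system on G, defined by: K → H ∈ Tu(G) if and only if K ≤ H and either H ≠ G or K = H. Let O be a transfer system on G that contains Tu(G) (i.e., every K ≤ H with H ≠ G satisfies K → H ∈ O) and is not complete (i.e., there exist subgroups K ≤ H with K → H ∉ O). Then Tu(G) is the maximal compatible transfer system of O: the pair (O, Tu(G)) is compatible, and every transfer system O_m with (O, O_m) compatible is contained in Tu(G). -/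
/-! A transfer `K → G` with `K ≠ G` in a compatible partner of `O` would, since `O` contains every
`K ∩ J → K`, force `J → G ∈ O` for every `J`; restricting these makes `O` complete. So any
compatible partner only has trivial transfers into `G`, which is exactly `Tu(G)`, and `Tu(G)` itself
is compatible because its only transfers into `G` are identities. -/

namespace TransferSystem

variable {G : Type*} [Group G]

theorem rel_of_rel_of_le {O : TransferSystem G} {K L H : Subgroup G} (h : O.rel K H)
    (hKL : K ≤ L) (hLH : L ≤ H) : O.rel K L := by
  simpa only [inf_eq_left.mpr hKL] using O.restrict L h hLH

theorem rel_of_forall_rel_top {O : TransferSystem G} (h : ∀ A : Subgroup G, O.rel A ⊤)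
    {A B : Subgroup G} (hAB : A ≤ B) : O.rel A B :=
  rel_of_rel_of_le (h A) hAB le_top

theorem compatible_of_rel_iff {Tu O : TransferSystem G}
    (hTu : ∀ K H : Subgroup G, Tu.rel K H ↔ K ≤ H ∧ (H ≠ ⊤ ∨ K = H))
    (hcont : ∀ K H : Subgroup G, K ≤ H → H ≠ ⊤ → O.rel K H) :
    O.Compatible Tu := by
  refine ⟨fun K H hKH => ?_, fun K J H hJH hKH hO => ?_⟩
  · obtain ⟨hle, hH | rfl⟩ := (hTu K H).mp hKH
    · exact hcont K H hle hH
    · exact O.refl K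
  · obtain ⟨-, hH | rfl⟩ := (hTu K H).mp hKH
    · exact hcont J H hJH hH
    · rwa [inf_eq_right.mpr hJH] at hO

theorem Compatible.eq_top_of_rel_top {O Om : TransferSystem G} (hcomp : O.Compatible Om)
    (hcont : ∀ K H : Subgroup G, K ≤ H → H ≠ ⊤ → O.rel K H)
    (hnc : ∃ K H : Subgroup G, K ≤ H ∧ ¬ O.rel K H) {K : Subgroup G} (hK : Om.rel K ⊤) :
    K = ⊤ := by
  by_contra hKtop
  have hcomplete : ∀ A : Subgroup G, O.rel A ⊤ := fun A =>
    hcomp.2 K A ⊤ le_top hK (hcont (K ⊓ A) K inf_le_left hKtop)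
  obtain ⟨A, B, hAB, hO⟩ := hnc
  exact hO (rel_of_forall_rel_top hcomplete hAB)

end TransferSystem

theorem stmt_10_general {G : Type*} [Group G] (Tu O : TransferSystem G)
    (hTu : ∀ K H : Subgroup G, Tu.rel K H ↔ K ≤ H ∧ (H ≠ ⊤ ∨ K = H))
    (hcont : ∀ K H : Subgroup G, K ≤ H → H ≠ ⊤ → O.rel K H)
    (hnc : ∃ K H : Subgroup G, K ≤ H ∧ ¬ O.rel K H) :
    O.IsMaxCompatible Tu := by
  refine ⟨TransferSystem.compatible_of_rel_iff hTu hcont, fun Om hcomp K H hKH => ?_⟩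
  rw [hTu]
  refine ⟨Om.le_of_rel hKH, ?_⟩
  by_cases hH : H = ⊤
  · subst hH
    exact Or.inr (hcomp.eq_top_of_rel_top hcont hnc hKH)
  · exact Or.inl hH

/-- if a non-complete transfer system `O` contains the tulip
`Tu(G)`, then `Tu(G)` is the maximal compatible transfer system of `O`. -/
theorem stmt_10 {G : Type*} [Group G] [Finite G] (Tu O : TransferSystem G)
    (hTu : ∀ K H : Subgroup G, Tu.rel K H ↔ K ≤ H ∧ (H ≠ ⊤ ∨ K = H))
    (hcont : ∀ K H : Subgroup G, K ≤ H → H ≠ ⊤ → O.rel K H)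
    (hnc : ∃ K H : Subgroup G, K ≤ H ∧ ¬ O.rel K H) :
    O.IsMaxCompatible Tu :=
  stmt_10_general Tu O hTu hcont hnc
end

section
/- Let G be a finite group and O a disklike transfer system on G. Let E be the set of non-reflexive transfers of O, i.e., pairs (K, H) of subgroups with K → H ∈ O and K ≠ H, and let C be the set of cover relations in the restriction order on E, i.e., pairs (r, e) ∈ E × E with r ≺ e. Then the cardinality of E is at most 2·(cardinality of C) + 1. -/
/-!
Split the non-reflexive transfers `K → H` into three kinds. If `H ≠ G`, disklikeness makes
`K → H` a proper restriction of some `L → G`, so it is covered by some transfer above it. If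
`H = G` and some proper subgroup `I` is not contained in `K`, the non-reflexive restriction
`K ∩ I → I` lies below `K → G`, so `K → G` covers some transfer. Otherwise `K` is the greatest
proper subgroup of `G`, which leaves at most one transfer. So the first kind lies in the image
of `C` under the source projection, the second in its image under the target projection, and
`|E| ≤ |C| + |C| + 1`.
-/

section RestrLt

variable {G : Type*} [Group G]

lemma RestrLt.snd_lt {r e : Subgroup G × Subgroup G} (h : RestrLt r e) : r.2 < e.2 := by
  obtain ⟨I, hI, rfl⟩ := h
  exact hI

lemma RestrLt.fst_ne_snd {r e : Subgroup G × Subgroup G} (hr : r.1 ≠ r.2) (h : RestrLt r e) :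
    e.1 ≠ e.2 := by
  obtain ⟨I, hI, rfl⟩ := h
  intro he
  exact hr (by simp only [he, inf_eq_right.mpr hI.le])

lemma restrLt_wellFounded [Finite G] : WellFounded (@RestrLt G _) :=
  Subrelation.wf (fun h => RestrLt.snd_lt h) (InvImage.wf Prod.snd wellFounded_lt)

lemma restrLt_flip_wellFounded [Finite G] : WellFounded (flip (@RestrLt G _)) :=
  Subrelation.wf (fun h => RestrLt.snd_lt h) (InvImage.wf Prod.snd wellFounded_gt)

end RestrLt

namespace TransferSystem

variable {G : Type*} [Group G] [Finite G] (O : TransferSystem G)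

def nonreflTransfers : Set (Subgroup G × Subgroup G) :=
  {p | O.rel p.1 p.2 ∧ p.1 ≠ p.2}

def restrCovers : Set ((Subgroup G × Subgroup G) × (Subgroup G × Subgroup G)) :=
  {c | c.1 ∈ O.nonreflTransfers ∧ c.2 ∈ O.nonreflTransfers ∧ RestrCovBy O c.1 c.2}

/-- A minimal transfer strictly above `e`. -/
lemma exists_restrCovBy_above {e f : Subgroup G × Subgroup G} (hf : O.rel f.1 f.2)
    (hef : RestrLt e f) : ∃ f', O.rel f'.1 f'.2 ∧ RestrCovBy O e f' := by
  obtain ⟨f', ⟨hf', hef'⟩, hmin⟩ :=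
    restrLt_wellFounded.has_min {q | O.rel q.1 q.2 ∧ RestrLt e q} ⟨f, hf, hef⟩
  exact ⟨f', hf', hef', fun ⟨q, hq, heq, hqf'⟩ => hmin q ⟨hq, heq⟩ hqf'⟩

/-- A maximal non-reflexive transfer strictly below `e`. -/
lemma exists_restrCovBy_below {r e : Subgroup G × Subgroup G} (hr : O.rel r.1 r.2)
    (hr_ne : r.1 ≠ r.2) (hre : RestrLt r e) :
    ∃ r' ∈ O.nonreflTransfers, RestrCovBy O r' e := by
  obtain ⟨r', ⟨hr', hr'_ne, hr'e⟩, hmax⟩ :=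
    restrLt_flip_wellFounded.has_min {q | O.rel q.1 q.2 ∧ q.1 ≠ q.2 ∧ RestrLt q e}
      ⟨r, hr, hr_ne, hre⟩
  exact ⟨r', ⟨hr', hr'_ne⟩, hr'e,
    fun ⟨q, hq, hr'q, hqe⟩ => hmax q ⟨hq, hr'q.fst_ne_snd hr'_ne, hqe⟩ hr'q⟩

lemma mem_fst_image_restrCovers {e : Subgroup G × Subgroup G} (hd : O.Disklike)
    (he : e ∈ O.nonreflTransfers) (htop : e.2 ≠ ⊤) : e ∈ Prod.fst '' O.restrCovers := by
  obtain ⟨L, hL, hKL⟩ := hd e.1 e.2 he.1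
  have hlt : RestrLt e (L, ⊤) := ⟨e.2, lt_top_iff_ne_top.mpr htop, by rw [← hKL]⟩
  obtain ⟨f, hf, hef⟩ := O.exists_restrCovBy_above hL hlt
  exact ⟨(e, f), ⟨he, ⟨hf, hef.1.fst_ne_snd he.2⟩, hef⟩, rfl⟩

lemma mem_snd_image_restrCovers {K I : Subgroup G} (he : (K, ⊤) ∈ O.nonreflTransfers)
    (hI : I < ⊤) (hIK : ¬ I ≤ K) : (K, ⊤) ∈ Prod.snd '' O.restrCovers := by
  have hrel : O.rel (K ⊓ I) I := O.restrict I he.1 le_top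
  have hne : K ⊓ I ≠ I := fun h => hIK (h ▸ inf_le_left)
  obtain ⟨r, hr, hre⟩ := O.exists_restrCovBy_below (e := (K, ⊤)) hrel hne ⟨I, hI, rfl⟩
  exact ⟨(r, (K, ⊤)), ⟨hr, he, hre⟩, rfl⟩

lemma nonreflTransfers_subset (hd : O.Disklike) :
    O.nonreflTransfers ⊆ Prod.fst '' O.restrCovers ∪ Prod.snd '' O.restrCovers ∪
      (fun K => (K, ⊤)) '' {K | IsGreatest (Set.Iio ⊤) K} := by
  rintro ⟨K, H⟩ he
  by_cases htop : H = ⊤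
  · subst htop
    by_cases hK : ∃ I < ⊤, ¬ I ≤ K
    · obtain ⟨I, hI, hIK⟩ := hK
      exact .inl (.inr (O.mem_snd_image_restrCovers he hI hIK))
    · push Not at hK
      exact .inr ⟨K, ⟨lt_top_iff_ne_top.mpr he.2, hK⟩, rfl⟩
  · exact .inl (.inl (O.mem_fst_image_restrCovers hd he htop))

theorem ncard_nonreflTransfers_le (hd : O.Disklike) :
    O.nonreflTransfers.ncard ≤ 2 * O.restrCovers.ncard + 1 := by
  have hgreatest : {K : Subgroup G | IsGreatest (Set.Iio ⊤) K}.Subsingleton :=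
    fun _ hK _ hK' => hK.unique hK'
  have htop :
      ((fun K => (K, (⊤ : Subgroup G))) '' {K | IsGreatest (Set.Iio ⊤) K}).ncard ≤ 1 :=
    Set.ncard_le_one_iff_subsingleton.mpr (hgreatest.image _)
  calc O.nonreflTransfers.ncard
      ≤ (Prod.fst '' O.restrCovers).ncard + (Prod.snd '' O.restrCovers).ncard + 1 :=
        (Set.ncard_le_ncard (O.nonreflTransfers_subset hd)).trans
          ((Set.ncard_union_le _ _).trans (add_le_add (Set.ncard_union_le _ _) htop))
    _ ≤ 2 * O.restrCovers.ncard + 1 := by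
        have := Set.ncard_image_le (f := Prod.fst) (Set.toFinite O.restrCovers)
        have := Set.ncard_image_le (f := Prod.snd) (Set.toFinite O.restrCovers)
        omega

end TransferSystem

/-- for a disklike transfer system `O`, the number of
non-reflexive transfers is at most twice the number of cover relations of the
restriction order plus one. -/
theorem stmt_12 {G : Type*} [Group G] [Finite G] (O : TransferSystem G)
    (hd : O.Disklike) :
    {p : Subgroup G × Subgroup G | O.rel p.1 p.2 ∧ p.1 ≠ p.2}.ncard ≤
      2 * {c : (Subgroup G × Subgroup G) × (Subgroup G × Subgroup G) |
            (O.rel c.1.1 c.1.2 ∧ c.1.1 ≠ c.1.2) ∧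
            (O.rel c.2.1 c.2.2 ∧ c.2.1 ≠ c.2.2) ∧
            RestrCovBy O c.1 c.2}.ncard + 1 :=
  O.ncard_nonreflTransfers_le hd
end

section
/- Let G be a finite group, N a normal subgroup of G, p : G → G/N the quotient map, and O a transfer system on G/N. For subgroups K ≤ H of G, the transfer K → H belongs to the inflation p*O if and only if p(K) → p(H) ∈ O and K = p⁻¹(p(K)) ∩ H (here p(K) denotes the image subgroup of K in G/N and p⁻¹(p(K)) = KN). Equivalently, p*O equals the restriction closure of p⁻¹O: K → H ∈ p*O if and only if there exists a transfer A → B ∈ p⁻¹O with H ≤ B and K = A ∩ H. -/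
/-!
The relation "`f K → f H ∈ O` and `K = f⁻¹(f K) ⊓ H`" is a transfer system on `G` for any
homomorphism `f : G →* Q`: the second condition makes `f` commute with the intersections
occurring in restriction, and it is stable under composition and conjugation. For `f`
surjective it contains every preimage transfer `f⁻¹ K → f⁻¹ H`, and each of its transfers
`K → H` is the restriction of the preimage transfer `f⁻¹(f K) → f⁻¹(f H)` to `H`, so it is the
transfer system generated by the preimage transfers.
-/

namespace Subgroup

variable {G Q : Type*} [Group G] [Group Q]

theorem map_map_conj (f : G →* Q) (K : Subgroup G) (g : G) :
    (K.map (MulAut.conj g).toMonoidHom).map f =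
      (K.map f).map (MulAut.conj (f g)).toMonoidHom := by
  rw [map_map, map_map]
  congr 1
  ext
  simp

variable {f : G →* Q} {K L H : Subgroup G}

theorem eq_comap_map_inf_iff :
    K = (K.map f).comap f ⊓ H ↔ K ≤ H ∧ ∀ x ∈ H, f x ∈ K.map f → x ∈ K := by
  refine ⟨fun hK => ⟨hK.le.trans inf_le_right, fun x hxH hx => hK ▸ ⟨hx, hxH⟩⟩, ?_⟩
  rintro ⟨hKH, hsat⟩
  exact le_antisymm (le_inf (le_comap_map f K) hKH) fun x hx => hsat x hx.2 hx.1

theorem map_inf_eq_of_eq_comap_map_inf (hK : K = (K.map f).comap f ⊓ H) (hLH : L ≤ H) :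
    (K ⊓ L).map f = K.map f ⊓ L.map f := by
  refine le_antisymm (map_inf_le K L f) ?_
  rintro _ ⟨hyK, y, hyL, rfl⟩
  exact ⟨y, ⟨(eq_comap_map_inf_iff.mp hK).2 y (hLH hyL) hyK, hyL⟩, rfl⟩

theorem eq_comap_map_inf_restrict (hK : K = (K.map f).comap f ⊓ H) (hLH : L ≤ H) :
    K ⊓ L = ((K ⊓ L).map f).comap f ⊓ L := by
  refine eq_comap_map_inf_iff.mpr ⟨inf_le_right, fun x hxL hx => ?_⟩
  rw [map_inf_eq_of_eq_comap_map_inf hK hLH] at hx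
  exact ⟨(eq_comap_map_inf_iff.mp hK).2 x (hLH hxL) hx.1, hxL⟩

theorem eq_comap_map_inf_trans (hLK : L = (L.map f).comap f ⊓ K)
    (hKH : K = (K.map f).comap f ⊓ H) : L = (L.map f).comap f ⊓ H := by
  obtain ⟨hLK, hL⟩ := eq_comap_map_inf_iff.mp hLK
  obtain ⟨hKH, hK⟩ := eq_comap_map_inf_iff.mp hKH
  exact eq_comap_map_inf_iff.mpr
    ⟨hLK.trans hKH, fun x hxH hx => hL x (hK x hxH (map_mono hLK hx)) hx⟩

theorem eq_comap_map_inf_conj (hK : K = (K.map f).comap f ⊓ H) (g : G) :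
    K.map (MulAut.conj g).toMonoidHom =
      ((K.map (MulAut.conj g).toMonoidHom).map f).comap f ⊓
        H.map (MulAut.conj g).toMonoidHom := by
  obtain ⟨hKH, hsat⟩ := eq_comap_map_inf_iff.mp hK
  refine eq_comap_map_inf_iff.mpr ⟨map_mono hKH, ?_⟩
  rintro _ ⟨y, hyH, rfl⟩ hy
  rw [map_map_conj] at hy
  obtain ⟨z, hzK, hz⟩ := hy
  have hzy : z = f y := by simpa using hz
  exact ⟨y, hsat y hyH (hzy ▸ hzK), rfl⟩

end Subgroup

namespace TransferSystem

variable {G Q : Type*} [Group G] [Group Q]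

theorem IsGeneratedBy.rel_iff {B : Subgroup G → Subgroup G → Prop} {T T' : TransferSystem G}
    (hT : T.IsGeneratedBy B) (hT' : T'.IsGeneratedBy B) {K H : Subgroup G} :
    T.rel K H ↔ T'.rel K H :=
  ⟨hT.2 T' hT'.1 K H, hT'.2 T hT.1 K H⟩

def inflation (f : G →* Q) (O : TransferSystem Q) : TransferSystem G where
  rel K H := O.rel (K.map f) (H.map f) ∧ K = (K.map f).comap f ⊓ H
  le_of_rel h := h.2.le.trans inf_le_right
  refl H := ⟨O.refl _, (inf_eq_right.mpr (Subgroup.le_comap_map f H)).symm⟩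
  conj g h := by
    refine ⟨?_, Subgroup.eq_comap_map_inf_conj h.2 g⟩
    rw [Subgroup.map_map_conj, Subgroup.map_map_conj]
    exact O.conj _ h.1
  restrict L h hLH := by
    refine ⟨?_, Subgroup.eq_comap_map_inf_restrict h.2 hLH⟩
    rw [Subgroup.map_inf_eq_of_eq_comap_map_inf h.2 hLH]
    exact O.restrict _ h.1 (Subgroup.map_mono hLH)
  comp hLK hKH := ⟨O.comp hLK.1 hKH.1, Subgroup.eq_comap_map_inf_trans hLK.2 hKH.2⟩

theorem inflation_rel_comap {f : G →* Q} (hf : Function.Surjective f) {O : TransferSystem Q}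
    {K H : Subgroup Q} (h : O.rel K H) : (inflation f O).rel (K.comap f) (H.comap f) := by
  refine ⟨?_, Subgroup.eq_comap_map_inf_iff.mpr
    ⟨Subgroup.comap_mono (O.le_of_rel h), fun x _ hx => ?_⟩⟩
  · rwa [Subgroup.map_comap_eq_self_of_surjective hf,
      Subgroup.map_comap_eq_self_of_surjective hf]
  · rwa [Subgroup.map_comap_eq_self_of_surjective hf] at hx

section QuotientGroup

variable {N : Subgroup G} [N.Normal] {O : TransferSystem (G ⧸ N)}

theorem inflation_rel_iff_exists_preimageRel {K H : Subgroup G} :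
    (inflation (QuotientGroup.mk' N) O).rel K H ↔
      ∃ A B : Subgroup G, preimageRel N O A B ∧ H ≤ B ∧ K = A ⊓ H := by
  constructor
  · rintro ⟨hO, hK⟩
    exact ⟨_, _, ⟨_, _, hO, rfl, rfl⟩, Subgroup.le_comap_map _ H, hK⟩
  · rintro ⟨_, _, ⟨_, _, hO, rfl, rfl⟩, hHB, rfl⟩
    exact (inflation _ O).restrict H (inflation_rel_comap (QuotientGroup.mk'_surjective N) hO) hHB

theorem isGeneratedBy_inflation_preimageRel :
    (inflation (QuotientGroup.mk' N) O).IsGeneratedBy (preimageRel N O) := by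
  refine ⟨?_, fun T hT K H h => ?_⟩
  · rintro _ _ ⟨K, H, hO, rfl, rfl⟩
    exact inflation_rel_comap (QuotientGroup.mk'_surjective N) hO
  · obtain ⟨A, B, hAB, hHB, rfl⟩ := inflation_rel_iff_exists_preimageRel.mp h
    exact T.restrict H (hT A B hAB) hHB

end QuotientGroup

end TransferSystem

open TransferSystem

theorem stmt_13_general {G : Type*} [Group G] (N : Subgroup G) [N.Normal]
    (O : TransferSystem (G ⧸ N)) (P : TransferSystem G)
    (hP : P.IsGeneratedBy (preimageRel N O)) (K H : Subgroup G) :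
    (P.rel K H ↔
      O.rel (K.map (QuotientGroup.mk' N)) (H.map (QuotientGroup.mk' N)) ∧
        K = (K.map (QuotientGroup.mk' N)).comap (QuotientGroup.mk' N) ⊓ H) ∧
    (P.rel K H ↔
      ∃ A B : Subgroup G, preimageRel N O A B ∧ H ≤ B ∧ K = A ⊓ H) := by
  have hP_iff : P.rel K H ↔ (inflation (QuotientGroup.mk' N) O).rel K H :=
    hP.rel_iff isGeneratedBy_inflation_preimageRel
  exact ⟨hP_iff, hP_iff.trans inflation_rel_iff_exists_preimageRel⟩

/-- characterization of the inflation `p*O`: for `K ≤ H`,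
`K → H ∈ p*O` iff `p(K) → p(H) ∈ O` and `K = p⁻¹(p(K)) ∩ H`; equivalently,
`p*O` is the restriction closure of `p⁻¹O`. -/
theorem stmt_13 {G : Type*} [Group G] [Finite G] (N : Subgroup G) [N.Normal]
    (O : TransferSystem (G ⧸ N)) (P : TransferSystem G)
    (hP : P.IsGeneratedBy (preimageRel N O)) (K H : Subgroup G) (hKH : K ≤ H) :
    (P.rel K H ↔
      O.rel (K.map (QuotientGroup.mk' N)) (H.map (QuotientGroup.mk' N)) ∧
        K = (K.map (QuotientGroup.mk' N)).comap (QuotientGroup.mk' N) ⊓ H) ∧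
    (P.rel K H ↔
      ∃ A B : Subgroup G, preimageRel N O A B ∧ H ≤ B ∧ K = A ⊓ H) :=
  stmt_13_general N O P hP K H
end

section
/- Let G be a group, let A and B be subgroups of G, and let N be a normal subgroup of G. If (as subsets of G) the intersection of the set products A·B and A·N equals A, then (as subsets of G) the set product (A ∩ B)·N equals (A·N) ∩ (B·N). -/
/-! If `x = a n₁ = b n₂` with `a ∈ A`, `b ∈ B` and `n₁, n₂ ∈ N`, then `b = a (n₁ n₂⁻¹)` lies in
`A·N`, and also in `A·B` because `1 ∈ A`; the hypothesis puts `b` in `A ∩ B`, so `x = b n₂`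
lies in `(A ∩ B)·N`. -/

open scoped Pointwise

theorem Set.mul_subgroup_inter_mul_subgroup_subset {G : Type*} [Group G] (s t : Set G)
    (N : Subgroup G) : (s * N) ∩ (t * N) ⊆ (s * N ∩ t) * N := by
  rintro _ ⟨⟨a, ha, n₁, hn₁, rfl⟩, b, hb, n₂, hn₂, heq⟩
  have hb_sN : b ∈ s * N :=
    ⟨a, ha, n₁ * n₂⁻¹, mul_mem hn₁ (inv_mem hn₂),
      (mul_assoc a n₁ n₂⁻¹).symm.trans (mul_inv_eq_of_eq_mul heq.symm)⟩
  exact ⟨b, ⟨hb_sN, hb⟩, n₂, hn₂, heq⟩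

theorem stmt_16_general {G : Type*} [Group G] (A B N : Subgroup G)
    (h : ((A : Set G) * (B : Set G)) ∩ ((A : Set G) * (N : Set G)) = (A : Set G)) :
    ((A ⊓ B : Subgroup G) : Set G) * (N : Set G) =
      ((A : Set G) * (N : Set G)) ∩ ((B : Set G) * (N : Set G)) := by
  refine Set.inter_mul_subset.antisymm ?_
  have hAN_inter_B : (A : Set G) * N ∩ B ⊆ (A ⊓ B : Subgroup G) := fun b ⟨hb_AN, hb_B⟩ =>
    ⟨h.subset ⟨Set.subset_mul_right _ A.one_mem hb_B, hb_AN⟩, hb_B⟩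
  exact (Set.mul_subgroup_inter_mul_subgroup_subset _ _ N).trans
    (Set.mul_subset_mul_right hAN_inter_B)

/-- if `A·B ∩ A·N = A` as subsets of `G`, then
`(A ∩ B)·N = A·N ∩ B·N` as subsets of `G`. -/
theorem stmt_16 {G : Type*} [Group G] (A B N : Subgroup G) [N.Normal]
    (h : ((A : Set G) * (B : Set G)) ∩ ((A : Set G) * (N : Set G)) = (A : Set G)) :
    ((A ⊓ B : Subgroup G) : Set G) * (N : Set G) =
      ((A : Set G) * (N : Set G)) ∩ ((B : Set G) * (N : Set G)) :=
  stmt_16_general A B N h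
end
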